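/- Let A be a set, k ≥ 1 an integer, and let d_0, d_1, …, d_k : A³ → A be directed Jónsson operations, that is, satisfying for all elements of A: d_0(x,y,z) = x; d_i(x,y,x) = x for 0 ≤ i ≤ k; d_i(x,z,z) = d_{i+1}(x,x,z) for 0 ≤ i < k; d_k(x,y,z) = z. Let ℓ ≥ 1 be an odd integer, let α be a tolerance with respect to d_0, …, d_k, let β be a congruence with respect to d_0, …, d_k, and let T be a reflexive relation on A compatible with each d_i. Then α ∩ (β ∘_ℓ T) ⊆ (α ∩ β) ∘_{k'} (α ∩ T), where k' = ℓ(k−1) − k + 2. -/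
import Mathlib


/-- Relational composition: `a (Comp R S) c` iff there is `b` with `a R b` and `b S c`. -/
def Comp {A : Type*} (R S : A → A → Prop) : A → A → Prop :=
  fun a c => ∃ b, R a b ∧ S b c

/-- `AltComp R S m` is the alternating composition `R ∘ S ∘ R ∘ ⋯` with exactly `m` factors. -/
def AltComp {A : Type*} : (R S : A → A → Prop) → ℕ → A → A → Prop
  | _, _, 0 => Eq
  | R, _, 1 => R
  | R, S, (n+2) => Comp R (AltComp S R (n+1))

/-- Converse relation. -/
def Conv {A : Type*} (R : A → A → Prop) : A → A → Prop := fun a b => R b a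

/-- Intersection of relations. -/
def InterRel {A : Type*} (R S : A → A → Prop) : A → A → Prop := fun a b => R a b ∧ S a b

/-- `RelPow R n` is `R ∘ R ∘ ⋯ ∘ R` with `n` factors. -/
def RelPow {A : Type*} (R : A → A → Prop) : ℕ → A → A → Prop
  | 0 => Eq
  | 1 => R
  | n+2 => Comp R (RelPow R (n+1))

/-- Compatibility of a relation with a ternary operation. -/
def Compat3 {A : Type*} (f : A → A → A → A) (R : A → A → Prop) : Prop :=
  ∀ a a' b b' c c', R a a' → R b b' → R c c' → R (f a b c) (f a' b' c')

/-- Compatibility of a relation with an `n`-ary operation. -/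
def CompatV {A : Type*} {n : ℕ} (f : (Fin n → A) → A) (R : A → A → Prop) : Prop :=
  ∀ a b : Fin n → A, (∀ i, R (a i) (b i)) → R (f a) (f b)

/-- Composition `S 0 ∘ S 1 ∘ ⋯ ∘ S (n-1)` of a family of `n` relations. -/
def FamComp {A : Type*} : (n : ℕ) → (Fin n → A → A → Prop) → A → A → Prop
  | 0, _ => Eq
  | 1, S => S 0
  | n+2, S => Comp (S 0) (FamComp (n+1) (fun i => S i.succ))

/-- The substitution `x_0, x_0, x_2, x_2, x_4, x_4, …` (arguments identified in
consecutive pairs starting from the first two). -/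
def EvenPair {A : Type*} (m : ℕ) (x : Fin (m+2) → A) : Fin (m+2) → A :=
  fun j => x ⟨2 * (j.val / 2), by have := j.isLt; omega⟩

/-- The substitution `x_0, x_1, x_1, x_3, x_3, …` (arguments identified in
consecutive pairs starting from the second and third). -/
def OddPair {A : Type*} (m : ℕ) (x : Fin (m+2) → A) : Fin (m+2) → A :=
  fun j => x ⟨2 * ((j.val + 1) / 2) - 1, by have := j.isLt; omega⟩

private theorem altChain_of {A : Type*} :
    ∀ (n : ℕ) (R S : A → A → Prop) (z : ℕ → A),
      (∀ j, j < n → ((j % 2 = 0 → R (z j) (z (j+1))) ∧ (j % 2 = 1 → S (z j) (z (j+1))))) →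
      AltComp R S n (z 0) (z n) := by
  intro n
  induction n using Nat.strong_induction_on with
  | _ n ih =>
    match n with
    | 0 => intro R S z _; exact rfl
    | 1 => intro R S z h; exact (h 0 (by omega)).1 (by norm_num)
    | (m+2) =>
      intro R S z h
      refine ⟨z 1, (h 0 (by omega)).1 (by norm_num), ?_⟩
      exact ih (m+1) (by omega) S R (fun j => z (j+1)) (fun j hj =>
        ⟨fun hj0 => (h (j+1) (by omega)).2 (by omega),
         fun hj1 => (h (j+1) (by omega)).1 (by omega)⟩)

private theorem exists_chain {A : Type*} :
    ∀ (n : ℕ) (R S : A → A → Prop) (a c : A), AltComp R S n a c →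
      ∃ z : ℕ → A, z 0 = a ∧ z n = c ∧
        ∀ j, j < n → ((j % 2 = 0 → R (z j) (z (j+1))) ∧ (j % 2 = 1 → S (z j) (z (j+1)))) := by
  intro n
  induction n using Nat.strong_induction_on with
  | _ n ih =>
    match n with
    | 0 =>
      intro R S a c h
      exact ⟨fun _ => a, rfl, h, fun j hj => absurd hj (by omega)⟩
    | 1 =>
      intro R S a c h
      refine ⟨fun j => if j = 0 then a else c, by simp, by simp, ?_⟩
      intro j hj
      have hj0 : j = 0 := by omega
      subst hj0
      refine ⟨fun _ => ?_, fun h1 => by omega⟩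
      show R (if (0:ℕ) = 0 then a else c) (if (1:ℕ) = 0 then a else c)
      norm_num
      exact h
    | (m+2) =>
      intro R S a c h
      obtain ⟨b, hab, hbc⟩ := h
      obtain ⟨z', h0, hn, hz⟩ := ih (m+1) (by omega) S R b c hbc
      refine ⟨fun j => if j = 0 then a else z' (j-1), by simp, by simp [hn], ?_⟩
      intro j hj
      rcases Nat.eq_zero_or_pos j with hj0 | hjp
      · subst hj0
        refine ⟨fun _ => ?_, fun hh => by omega⟩
        show R (if (0:ℕ) = 0 then a else z' (0-1)) (if (1:ℕ) = 0 then a else z' (1-1))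
        norm_num
        rw [h0]; exact hab
      · have hj1 : j - 1 < m + 1 := by omega
        have hstep := hz (j-1) hj1
        rw [show j - 1 + 1 = j from by omega] at hstep
        constructor
        · intro hpar
          show R (if j = 0 then a else z' (j-1)) (if j+1 = 0 then a else z' (j+1-1))
          rw [if_neg (by omega), if_neg (by omega)]
          simpa using hstep.2 (by omega)
        · intro hpar
          show S (if j = 0 then a else z' (j-1)) (if j+1 = 0 then a else z' (j+1-1))
          rw [if_neg (by omega), if_neg (by omega)]
          simpa using hstep.1 (by omega)

theorem stmt12 {A : Type*}
    (k : ℕ) (hk : 1 ≤ k) (d : Fin (k+1) → A → A → A → A)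
    (hd0 : ∀ x y z, d 0 x y z = x)
    (hdmid : ∀ (i : Fin (k+1)) x y, d i x y x = x)
    (hdir : ∀ (i : ℕ) (hi : i < k) x z, d ⟨i, by omega⟩ x z z = d ⟨i+1, by omega⟩ x x z)
    (hdk : ∀ x y z, d (Fin.last k) x y z = z)
    (ℓ : ℕ) (hℓ : 1 ≤ ℓ) (hℓodd : Odd ℓ)
    (α : A → A → Prop)
    (hαrefl : ∀ a, α a a) (hαsymm : ∀ a b, α a b → α b a)
    (hαcompat : ∀ i, Compat3 (d i) α)
    (β : A → A → Prop) (hβ : Equivalence β) (hβcompat : ∀ i, Compat3 (d i) β)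
    (T : A → A → Prop) (hTrefl : ∀ a, T a a) (hTcompat : ∀ i, Compat3 (d i) T)
    (k' : ℕ) (hk' : (k' : ℤ) = ℓ * ((k : ℤ) - 1) - k + 2) :
    ∀ a c, InterRel α (AltComp β T ℓ) a c →
      AltComp (InterRel α β) (InterRel α T) k' a c := by
  classical
  have hodd : ℓ % 2 = 1 := Nat.odd_iff.mp hℓodd
  -- nat-indexed versions of the endpoint identities
  have hd0' : ∀ (h : 0 < k+1) x y z, d ⟨0, h⟩ x y z = x := by
    intro h x y z
    rw [show (⟨0, h⟩ : Fin (k+1)) = 0 from by apply Fin.ext; simp, hd0]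
  have hdk' : ∀ (h : k < k+1) x y z, d ⟨k, h⟩ x y z = z := by
    intro h x y z
    exact hdk x y z
  intro a c hin
  obtain ⟨hac, hcomp⟩ := hin
  by_cases hk1 : k = 1
  · -- A is a subsingleton
    subst hk1
    have hsub : ∀ x z : A, x = z := by
      intro x z
      have h1 := hdir 0 (by omega) x z
      rw [hd0' (by omega) x z z] at h1
      have h2 : d ⟨0+1, by omega⟩ x x z = z := hdk' (by omega) x x z
      rw [← h1] at h2
      exact h2
    have hk'1 : k' = 1 := by omega
    rw [hk'1]
    show InterRel α β a c
    exact ⟨hac, (hsub a c) ▸ hβ.refl a⟩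
  by_cases hl1 : ℓ = 1
  · subst hl1
    have hk'1 : k' = 1 := by omega
    rw [hk'1]
    exact ⟨hac, hcomp⟩
  -- main case : k ≥ 2, ℓ ≥ 3
  have hk2 : 2 ≤ k := by omega
  have hl3 : 3 ≤ ℓ := by omega
  have hk'n : k' = (ℓ-1) * (k-1) + 1 := by
    have hz : (k' : ℤ) = (((ℓ-1) * (k-1) + 1 : ℕ) : ℤ) := by
      push_cast [Nat.cast_sub (show 1 ≤ ℓ by omega), Nat.cast_sub (show 1 ≤ k by omega)]
      rw [hk']; ring
    exact_mod_cast hz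
  have hk'3 : 3 ≤ k' := by
    have := Nat.mul_le_mul (show 2 ≤ ℓ-1 by omega) (show 1 ≤ k-1 by omega)
    omega
  have h2 : 2 ∣ (ℓ-1) := by omega
  obtain ⟨x, hx0, hxl, hx⟩ := exists_chain ℓ β T a c hcomp
  -- basic chain facts
  have hβa1 : β a (x 1) := by
    have := (hx 0 (by omega)).1 (by norm_num)
    rwa [hx0] at this
  have hβlc : β (x (ℓ-1)) c := by
    have := (hx (ℓ-1) (by omega)).1 (by omega)
    rwa [show ℓ-1+1 = ℓ from by omega, hxl] at this
  -- alpha lemmas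
  have l1a : ∀ (i : Fin (k+1)) y, α (d i a y c) a := by
    intro i y
    have h := hαcompat i a a y y c a (hαrefl a) (hαrefl y) (hαsymm a c hac)
    rwa [hdmid i a y] at h
  have l1c : ∀ (i : Fin (k+1)) y, α (d i a y c) c := by
    intro i y
    have h := hαcompat i a c y y c c hac (hαrefl y) (hαrefl c)
    rwa [hdmid i c y] at h
  have l2 : ∀ (u : A) (i : Fin (k+1)) y, α u a → α u c → α u (d i a y c) := by
    intro u i y h1 h2'
    have h := hαcompat i u a y y u c h1 (hαrefl y) h2'
    rwa [hdmid i u y] at h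
  have gridα : ∀ (i1 : ℕ) (h1 : i1 < k+1) (i2 : ℕ) (h2 : i2 < k+1) (y y' : A),
      α (d ⟨i1, h1⟩ a y c) (d ⟨i2, h2⟩ a y' c) :=
    fun i1 h1 i2 h2 y y' => l2 _ ⟨i2, h2⟩ y' (l1a ⟨i1, h1⟩ y) (l1c ⟨i1, h1⟩ y)
  -- identities
  have e1 : ∀ (h : 1 < k+1), d ⟨1, h⟩ a a c = a := by
    intro h
    have h1 := hdir 0 (by omega) a c
    rw [hd0' (by omega) a c c] at h1
    exact h1.symm
  have elast : ∀ (h : k-1 < k+1), d ⟨k-1, h⟩ a c c = c := by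
    intro h
    have h1 := hdir (k-1) (by omega) a c
    have h2 : (⟨k-1+1, by omega⟩ : Fin (k+1)) = Fin.last k := by
      apply Fin.ext; simp [Fin.last]; omega
    rw [h2, hdk] at h1
    exact h1
  -- beta wrap step
  have wrapβ : ∀ (i : ℕ) (hi : i < k),
      β (d ⟨i, by omega⟩ a (x (ℓ-1)) c) (d ⟨i+1, by omega⟩ a (x 1) c) := by
    intro i hi
    have s1 : β (d ⟨i, by omega⟩ a (x (ℓ-1)) c) (d ⟨i, by omega⟩ a c c) :=
      hβcompat _ _ _ _ _ _ _ (hβ.refl a) hβlc (hβ.refl c)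
    rw [hdir i hi] at s1
    exact hβ.trans s1 (hβcompat _ _ _ _ _ _ _ (hβ.refl a) hβa1 (hβ.refl c))
  -- the target chain function, via an opaque definition
  obtain ⟨Dc, hDc⟩ : ∃ Dc : ℕ → ℕ → A,
      Dc = fun i j => d ⟨min i k, by omega⟩ a (x j) c := ⟨_, rfl⟩
  have hDval : ∀ (i j : ℕ) (h : i ≤ k), Dc i j = d ⟨i, by omega⟩ a (x j) c := by
    intro i j h
    rw [hDc]
    show d ⟨min i k, _⟩ a (x j) c = d ⟨i, _⟩ a (x j) c
    congr 1
    apply Fin.ext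
    simpa using h
  obtain ⟨W, hWdef⟩ : ∃ W : ℕ → A,
      W = fun s => if s = 0 then a else if k' ≤ s then c
        else Dc ((s-1)/(ℓ-1) + 1) ((s-1) % (ℓ-1) + 1) := ⟨_, rfl⟩
  have hW0 : W 0 = a := by
    rw [hWdef]
    norm_num
  have hWk' : W k' = c := by
    rw [hWdef]
    show (if k' = 0 then a else if k' ≤ k' then c else _) = c
    rw [if_neg (by omega), if_pos (le_refl k')]
  have hWmid : ∀ s, s ≠ 0 → s < k' → W s = Dc ((s-1)/(ℓ-1) + 1) ((s-1) % (ℓ-1) + 1) := by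
    intro s h1 h2
    rw [hWdef]
    show (if s = 0 then a else if k' ≤ s then c else _) = _
    rw [if_neg h1, if_neg (by omega)]
  -- step property
  have hsteps : ∀ s, s < k' →
      ((s % 2 = 0 → InterRel α β (W s) (W (s+1))) ∧
       (s % 2 = 1 → InterRel α T (W s) (W (s+1)))) := by
    intro s hs
    by_cases hs0 : s = 0
    · subst hs0
      have hW1 : W 1 = Dc 1 1 := by
        rw [hWmid 1 (by omega) (by omega)]
        norm_num
      refine ⟨fun _ => ?_, fun hh => absurd hh (by omega)⟩
      rw [hW0, hW1, hDval 1 1 (by omega)]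
      constructor
      · exact l2 a ⟨1, by omega⟩ (x 1) (hαrefl a) hac
      · have hc := hβcompat ⟨1, by omega⟩ a a a (x 1) c c (hβ.refl a) hβa1 (hβ.refl c)
        rwa [e1 (by omega)] at hc
    by_cases hlast : s = k' - 1
    · -- last step to c
      have hdm := Nat.div_add_mod (s-1) (ℓ-1)
      have emul : (ℓ-1)*(k-1) = (ℓ-1)*(k-2) + (ℓ-1) := by
        rw [show k-1 = (k-2)+1 from by omega, Nat.mul_succ]
      have hs' : s - 1 = (ℓ-2) + (ℓ-1)*(k-2) := by omega
      have hdiv : (s-1)/(ℓ-1) = k-2 := by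
        rw [hs', Nat.add_mul_div_left _ _ (show 0 < ℓ-1 by omega),
          Nat.div_eq_of_lt (show ℓ-2 < ℓ-1 by omega)]
        omega
      have hmod : (s-1) % (ℓ-1) = ℓ-2 := by
        rw [hs', Nat.add_mul_mod_self_left, Nat.mod_eq_of_lt (show ℓ-2 < ℓ-1 by omega)]
      have hWs : W s = Dc (k-1) (ℓ-1) := by
        rw [hWmid s hs0 hs, hdiv, hmod, show k-2+1 = k-1 from by omega,
          show ℓ-2+1 = ℓ-1 from by omega]
      have hWs1 : W (s+1) = c := by
        rw [show s+1 = k' from by omega, hWk']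
      obtain ⟨e, he⟩ := h2.mul_right (k-1)
      refine ⟨fun _ => ?_, fun hh => absurd hh (by omega)⟩
      rw [hWs, hWs1, hDval (k-1) (ℓ-1) (by omega)]
      constructor
      · exact l1c ⟨k-1, by omega⟩ (x (ℓ-1))
      · have s1 : β (d ⟨k-1, by omega⟩ a (x (ℓ-1)) c) (d ⟨k-1, by omega⟩ a c c) :=
          hβcompat _ _ _ _ _ _ _ (hβ.refl a) hβlc (hβ.refl c)
        rwa [elast (by omega)] at s1
    · -- middle steps
      have hs1 : 1 ≤ s := by omega
      have hs2 : s ≤ k' - 2 := by omega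
      have hdm := Nat.div_add_mod (s-1) (ℓ-1)
      have hrlt : (s-1) % (ℓ-1) < ℓ-1 := Nat.mod_lt _ (by omega)
      have hqlt : (s-1)/(ℓ-1) < k-1 := by
        rw [Nat.div_lt_iff_lt_mul (show 0 < ℓ-1 by omega), Nat.mul_comm]
        omega
      set q := (s-1)/(ℓ-1) with hqdef
      set r := (s-1) % (ℓ-1) with hrdef
      have hWs : W s = Dc (q+1) (r+1) := hWmid s hs0 hs
      obtain ⟨e, he⟩ := h2.mul_right q
      by_cases hrow : r + 1 < ℓ - 1
      · -- row step
        have hs' : s = (r+1) + (ℓ-1)*q := by omega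
        have hdiv : s/(ℓ-1) = q := by
          rw [hs', Nat.add_mul_div_left _ _ (show 0 < ℓ-1 by omega),
            Nat.div_eq_of_lt hrow]
          omega
        have hmod : s % (ℓ-1) = r+1 := by
          rw [hs', Nat.add_mul_mod_self_left, Nat.mod_eq_of_lt hrow]
        have hWs1 : W (s+1) = Dc (q+1) (r+2) := by
          rw [hWmid (s+1) (by omega) (by omega)]
          simp only [Nat.add_sub_cancel]
          rw [hdiv, hmod]
        have hstep := hx (r+1) (by omega)
        constructor
        · intro hpar
          have hβs : β (x (r+1)) (x (r+2)) := by
            have := hstep.1 (by omega)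
            simpa using this
          rw [hWs, hWs1, hDval (q+1) (r+1) (by omega), hDval (q+1) (r+2) (by omega)]
          refine ⟨gridα _ _ _ _ _ _, ?_⟩
          exact hβcompat _ _ _ _ _ _ _ (hβ.refl a) hβs (hβ.refl c)
        · intro hpar
          have hTs : T (x (r+1)) (x (r+2)) := by
            have := hstep.2 (by omega)
            simpa using this
          rw [hWs, hWs1, hDval (q+1) (r+1) (by omega), hDval (q+1) (r+2) (by omega)]
          refine ⟨gridα _ _ _ _ _ _, ?_⟩
          exact hTcompat _ _ _ _ _ _ _ (hTrefl a) hTs (hTrefl c)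
      · -- wrap step
        have hr : r = ℓ-2 := by omega
        have hs' : s = (ℓ-1)*(q+1) := by
          rw [Nat.mul_succ]; omega
        have hdiv : s/(ℓ-1) = q+1 := by
          rw [hs', Nat.mul_div_cancel_left _ (show 0 < ℓ-1 by omega)]
        have hmod : s % (ℓ-1) = 0 := by
          rw [hs', Nat.mul_mod_right]
        have hWs1 : W (s+1) = Dc (q+2) 1 := by
          rw [hWmid (s+1) (by omega) (by omega)]
          simp only [Nat.add_sub_cancel]
          rw [hdiv, hmod]
        obtain ⟨e2, he2⟩ := h2.mul_right (q+1)
        refine ⟨fun _ => ?_, fun hh => absurd hh (by omega)⟩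
        rw [hWs, hWs1, hDval (q+1) (r+1) (by omega), hDval (q+2) 1 (by omega)]
        refine ⟨gridα _ _ _ _ _ _, ?_⟩
        have hw := wrapβ (q+1) (by omega)
        rw [show r+1 = ℓ-1 from by omega]
        exact hw
  have key := altChain_of k' (InterRel α β) (InterRel α T) W hsteps
  rwa [hW0, hWk'] at key
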